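/- (Tame product estimate.) For all s₀ > d/2 and all t ≥ 0, there exists C > 0 such that for all σ ≥ 0, ‖u₁u₂‖_{H^{σ,t}} ≤ C ‖u₁‖_{H^{σ,s₀}} ‖u₂‖_{H^{σ,t}} + C ‖u₂‖_{H^{σ,s₀}} ‖u₁‖_{H^{σ,t}}, for all u₁, u₂ ∈ H^{σ,s₀} ∩ H^{σ,t}. -/

import Mathlib

open scoped ENNReal BigOperators

/-- Euclidean norm of a lattice point `ξ ∈ ℤ^d`. -/
noncomputable def latNorm {d : ℕ} (ξ : Fin d → ℤ) : ℝ :=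
  Real.sqrt (∑ i, ((ξ i : ℝ)) ^ 2)

/-- Japanese bracket `⟨ξ⟩ = (1+|ξ|²)^{1/2}`. -/
noncomputable def latJap {d : ℕ} (ξ : Fin d → ℤ) : ℝ :=
  Real.sqrt (1 + ∑ i, ((ξ i : ℝ)) ^ 2)

/-- Weight `e^{2σ|ξ|}⟨ξ⟩^{2s}` of the analytic Sobolev space `H^{σ,s}(T^d)`. -/
noncomputable def hWeight {d : ℕ} (σ s : ℝ) (ξ : Fin d → ℤ) : ℝ≥0∞ :=
  ENNReal.ofReal (Real.exp (2 * σ * latNorm ξ) * (latJap ξ) ^ (2 * s))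

/-- Squared `H^{σ,s}(T^d)` norm of a function given by its Fourier
coefficients `c : ℤ^d → ℂ`. -/
noncomputable def hNormSq {d : ℕ} (σ s : ℝ) (c : (Fin d → ℤ) → ℂ) : ℝ≥0∞ :=
  ∑' ξ, hWeight σ s ξ * (‖c ξ‖₊ : ℝ≥0∞) ^ 2

/-- `H^{σ,s}(T^d)` norm. -/
noncomputable def hNorm {d : ℕ} (σ s : ℝ) (c : (Fin d → ℤ) → ℂ) : ℝ≥0∞ :=
  (hNormSq σ s c) ^ (1/2 : ℝ)

/-- Convolution of Fourier coefficients: this represents the pointwise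
product of the corresponding functions on `T^d` (up to the fixed
normalization factor `(2π)^{-d}`, harmless for the estimates below). -/
noncomputable def conv {d : ℕ} (f g : (Fin d → ℤ) → ℂ) : (Fin d → ℤ) → ℂ :=
  fun ξ => ∑' ζ, f (ξ - ζ) * g ζ

/-!
The weight `e^{σ|ξ|}⟨ξ⟩^t` is split along `ξ = (ξ - ζ) + ζ` using
`e^{σ|ξ|} ≤ e^{σ|ξ-ζ|} e^{σ|ζ|}` and `⟨ξ⟩^t ≤ 2^t (⟨ξ-ζ⟩^t + ⟨ζ⟩^t)`, so that the weighted
coefficients of `u₁u₂` are dominated by two convolutions, each of an `H^{σ,t}`-weighted sequence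
with an `e^{σ|ξ|}`-weighted one. Young's inequality `ℓ² ⋆ ℓ¹ ⊆ ℓ²` bounds each convolution, and by
Cauchy–Schwarz `∑ e^{σ|ξ|}|u(ξ)| ≤ ‖⟨·⟩^{-s₀}‖_{ℓ²} ‖u‖_{H^{σ,s₀}}`, where the first factor is
finite because `2s₀ > d`. Working with `ℝ≥0∞`-valued sums throughout avoids all summability
side conditions.
-/

section L2

open MeasureTheory

variable {α : Type*}

noncomputable def l2Norm (f : α → ℝ≥0∞) : ℝ≥0∞ :=
  (∑' a, f a ^ 2) ^ (1/2 : ℝ)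

lemma ENNReal.sq_rpow_half (x : ℝ≥0∞) : (x ^ 2) ^ (1/2 : ℝ) = x := by
  simpa using ENNReal.pow_rpow_inv_natCast two_ne_zero x

lemma ENNReal.rpow_half_sq (x : ℝ≥0∞) : (x ^ (1/2 : ℝ)) ^ 2 = x := by
  simpa using ENNReal.rpow_inv_natCast_pow two_ne_zero x

lemma l2Norm_sq (f : α → ℝ≥0∞) : l2Norm f ^ 2 = ∑' a, f a ^ 2 :=
  ENNReal.rpow_half_sq _

lemma l2Norm_mono {f g : α → ℝ≥0∞} (h : ∀ a, f a ≤ g a) : l2Norm f ≤ l2Norm g := by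
  unfold l2Norm
  gcongr with a
  exact h a

lemma l2Norm_const_mul (c : ℝ≥0∞) (f : α → ℝ≥0∞) :
    l2Norm (fun a => c * f a) = c * l2Norm f := by
  simp only [l2Norm, mul_pow, ENNReal.tsum_mul_left]
  rw [ENNReal.mul_rpow_of_nonneg _ _ (by norm_num), ENNReal.sq_rpow_half]

lemma tsum_mul_le_l2Norm_mul_l2Norm (f g : α → ℝ≥0∞) :
    ∑' a, f a * g a ≤ l2Norm f * l2Norm g := by
  let _ : MeasurableSpace α := ⊤
  have : MeasurableSingletonClass α := ⟨fun _ => trivial⟩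
  have h := ENNReal.lintegral_mul_le_Lp_mul_Lq Measure.count Real.HolderConjugate.two_two
    (measurable_from_top (f := f)).aemeasurable (measurable_from_top (f := g)).aemeasurable
  simpa [lintegral_count, l2Norm] using h

lemma l2Norm_add_le (f g : α → ℝ≥0∞) : l2Norm (f + g) ≤ l2Norm f + l2Norm g := by
  let _ : MeasurableSpace α := ⊤
  have : MeasurableSingletonClass α := ⟨fun _ => trivial⟩
  have h := ENNReal.lintegral_Lp_add_le (μ := Measure.count) (p := 2)
    (measurable_from_top (f := f)).aemeasurable (measurable_from_top (f := g)).aemeasurable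
    one_le_two
  simpa [lintegral_count, l2Norm] using h

end L2

section Convolution

variable {G : Type*} [AddGroup G]

noncomputable def lconv (f g : G → ℝ≥0∞) (x : G) : ℝ≥0∞ :=
  ∑' y, f (x - y) * g y

lemma lconv_comm {G : Type*} [AddCommGroup G] (f g : G → ℝ≥0∞) : lconv f g = lconv g f := by
  funext x
  rw [lconv, lconv, ← (Equiv.subLeft x).tsum_eq]
  simp [mul_comm]

lemma lconv_sq_le (f g : G → ℝ≥0∞) (x : G) :
    lconv f g x ^ 2 ≤ (∑' y, f (x - y) ^ 2 * g y) * ∑' y, g y := by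
  calc lconv f g x ^ 2
      = (∑' y, f (x - y) * g y ^ (1/2 : ℝ) * g y ^ (1/2 : ℝ)) ^ 2 := by
        simp only [lconv, mul_assoc, ← sq, ENNReal.rpow_half_sq]
    _ ≤ (l2Norm (fun y => f (x - y) * g y ^ (1/2 : ℝ))
          * l2Norm (fun y => g y ^ (1/2 : ℝ))) ^ 2 := by
        gcongr
        exact tsum_mul_le_l2Norm_mul_l2Norm _ _
    _ = (∑' y, f (x - y) ^ 2 * g y) * ∑' y, g y := by
        simp only [mul_pow, l2Norm_sq, ENNReal.rpow_half_sq]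

lemma l2Norm_lconv_le (f g : G → ℝ≥0∞) : l2Norm (lconv f g) ≤ l2Norm f * ∑' y, g y := by
  suffices h : ∑' x, lconv f g x ^ 2 ≤ (l2Norm f * ∑' y, g y) ^ 2 by
    calc l2Norm (lconv f g) ≤ ((l2Norm f * ∑' y, g y) ^ 2) ^ (1/2 : ℝ) :=
          ENNReal.rpow_le_rpow h (by norm_num)
      _ = l2Norm f * ∑' y, g y := ENNReal.sq_rpow_half _
  calc ∑' x, lconv f g x ^ 2
      ≤ ∑' x, (∑' y, f (x - y) ^ 2 * g y) * ∑' y, g y := ENNReal.tsum_le_tsum (lconv_sq_le f g)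
    _ = (∑' x, ∑' y, f (x - y) ^ 2 * g y) * ∑' y, g y := ENNReal.tsum_mul_right
    _ = (∑' y, (∑' x, f (x - y) ^ 2) * g y) * ∑' y, g y := by
        rw [ENNReal.tsum_comm]
        simp only [ENNReal.tsum_mul_right]
    _ = (l2Norm f * ∑' y, g y) ^ 2 := by
        have hshift (y : G) : ∑' x, f (x - y) ^ 2 = ∑' x, f x ^ 2 :=
          (Equiv.subRight y).tsum_eq (fun x => f x ^ 2)
        simp only [hshift, ENNReal.tsum_mul_left, mul_pow, l2Norm_sq]
        ring

end Convolution

section Lattice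

variable {d : ℕ}

lemma Real.add_rpow_le_two_rpow_mul_add {a b t : ℝ} (ha : 0 ≤ a) (hb : 0 ≤ b) (ht : 0 ≤ t) :
    (a + b) ^ t ≤ 2 ^ t * (a ^ t + b ^ t) := by
  wlog hab : a ≤ b generalizing a b
  · simpa only [add_comm] using this hb ha (le_of_not_ge hab)
  calc (a + b) ^ t ≤ (2 * b) ^ t := by gcongr; linarith
    _ = 2 ^ t * b ^ t := Real.mul_rpow zero_le_two hb
    _ ≤ 2 ^ t * (a ^ t + b ^ t) := by gcongr; exact le_add_of_nonneg_left (by positivity)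

lemma latNorm_eq_norm (ξ : Fin d → ℤ) :
    latNorm ξ = ‖WithLp.toLp 2 (fun i => (ξ i : ℝ))‖ := by
  simp [latNorm, EuclideanSpace.norm_eq]

lemma latNorm_nonneg (ξ : Fin d → ℤ) : 0 ≤ latNorm ξ :=
  Real.sqrt_nonneg _

lemma latNorm_le_add (ξ ζ : Fin d → ℤ) : latNorm ξ ≤ latNorm (ξ - ζ) + latNorm ζ := by
  have hsplit : WithLp.toLp 2 (fun i => (ξ i : ℝ))
      = WithLp.toLp 2 (fun i => ((ξ - ζ) i : ℝ)) + WithLp.toLp 2 (fun i => (ζ i : ℝ)) := by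
    ext i
    simp
  simpa only [latNorm_eq_norm, hsplit] using norm_add_le _ _

lemma latJap_eq (ξ : Fin d → ℤ) : latJap ξ = √(1 + latNorm ξ ^ 2) := by
  rw [latJap, latNorm, Real.sq_sqrt (by positivity)]

lemma latJap_pos (ξ : Fin d → ℤ) : 0 < latJap ξ :=
  Real.sqrt_pos.mpr (by positivity)

lemma latJap_rpow_nonneg (ξ : Fin d → ℤ) (s : ℝ) : 0 ≤ latJap ξ ^ s :=
  Real.rpow_nonneg (latJap_pos ξ).le s

lemma latJap_le_add (ξ ζ : Fin d → ℤ) : latJap ξ ≤ latJap (ξ - ζ) + latJap ζ := by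
  have hc := latNorm_le_add ξ ζ
  have ha := latNorm_nonneg (ξ - ζ)
  have hb := latNorm_nonneg ζ
  have hA : latNorm (ξ - ζ) ≤ latJap (ξ - ζ) := by
    rw [latJap_eq]; exact Real.le_sqrt_of_sq_le (by linarith)
  have hB : latNorm ζ ≤ latJap ζ := by
    rw [latJap_eq]; exact Real.le_sqrt_of_sq_le (by linarith)
  have hA2 : latJap (ξ - ζ) ^ 2 = 1 + latNorm (ξ - ζ) ^ 2 := by
    rw [latJap_eq, Real.sq_sqrt (by positivity)]
  have hB2 : latJap ζ ^ 2 = 1 + latNorm ζ ^ 2 := by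
    rw [latJap_eq, Real.sq_sqrt (by positivity)]
  -- `(⟨a⟩ + ⟨b⟩)² ≥ 1 + a² + 2ab + b²` because `⟨a⟩⟨b⟩ ≥ ab`
  rw [latJap_eq, Real.sqrt_le_iff]
  refine ⟨add_nonneg (latJap_pos _).le (latJap_pos _).le, ?_⟩
  nlinarith [latNorm_nonneg ξ, mul_le_mul hA hB hb (latJap_pos _).le]

lemma latJap_rpow_le {t : ℝ} (ht : 0 ≤ t) (ξ ζ : Fin d → ℤ) :
    latJap ξ ^ t ≤ 2 ^ t * (latJap (ξ - ζ) ^ t + latJap ζ ^ t) :=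
  (Real.rpow_le_rpow (latJap_pos ξ).le (latJap_le_add ξ ζ) ht).trans
    (Real.add_rpow_le_two_rpow_mul_add (latJap_pos _).le (latJap_pos _).le ht)

end Lattice

section Summability

lemma ENNReal.tsum_fin_pi_prod {α : Type*} (g : α → ℝ≥0∞) (m : ℕ) :
    ∑' ξ : Fin m → α, ∏ i, g (ξ i) = (∑' a, g a) ^ m := by
  induction m with
  | zero => simp
  | succ m ih =>
    rw [← (Fin.consEquiv fun _ => α).tsum_eq, ENNReal.tsum_prod', pow_succ', ← ih,
      ← ENNReal.tsum_mul_right]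
    refine tsum_congr fun a => ?_
    rw [← ENNReal.tsum_mul_left]
    refine tsum_congr fun ξ => ?_
    simp [Fin.consEquiv, Fin.prod_univ_succ]

lemma summable_one_add_sq_int_rpow_neg {q : ℝ} (hq : 1 / 2 < q) :
    Summable fun n : ℤ => (1 + (n : ℝ) ^ 2) ^ (-q) := by
  refine (Real.summable_abs_int_rpow (b := 2 * q) (by linarith)).of_norm_bounded_eventually ?_
  filter_upwards [Filter.eventually_cofinite_ne 0] with n hn
  have hn' : (0 : ℝ) < |(n : ℝ)| := abs_pos.mpr (Int.cast_ne_zero.mpr hn)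
  rw [Real.norm_of_nonneg (by positivity)]
  calc (1 + (n : ℝ) ^ 2) ^ (-q) ≤ (|(n : ℝ)| ^ (2 : ℝ)) ^ (-q) :=
        Real.rpow_le_rpow_of_nonpos (by positivity) (by simp) (by linarith)
    _ = |(n : ℝ)| ^ (-(2 * q)) := by rw [← Real.rpow_mul hn'.le]; ring_nf

variable {d : ℕ}

/-- Since `∏ᵢ (1 + ξᵢ²) ≤ (1 + |ξ|²)^d`, the lattice sum of `⟨ξ⟩^{-2s}` is dominated by a
product of `d` sums over `ℤ`. -/
lemma latJap_rpow_neg_le_prod {s : ℝ} (hs : 0 ≤ s) (ξ : Fin d → ℤ) :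
    latJap ξ ^ (-(2 * s)) ≤ ∏ i, (1 + (ξ i : ℝ) ^ 2) ^ (-(s / d)) := by
  rcases Nat.eq_zero_or_pos d with rfl | hd
  · simp [latJap]
  set S := 1 + ∑ i, (ξ i : ℝ) ^ 2 with hS
  have hS0 : 0 ≤ S := by positivity
  have hfac : ∀ i, 0 < 1 + (ξ i : ℝ) ^ 2 := fun i => by positivity
  have hprod_le : ∏ i, (1 + (ξ i : ℝ) ^ 2) ≤ S ^ d := by
    calc ∏ i, (1 + (ξ i : ℝ) ^ 2) ≤ ∏ _i : Fin d, S := by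
          refine Finset.prod_le_prod (fun i _ => (hfac i).le) fun i _ => ?_
          have := Finset.single_le_sum (f := fun j => (ξ j : ℝ) ^ 2)
            (fun j _ => by positivity) (Finset.mem_univ i)
          linarith
      _ = S ^ d := by simp
  calc latJap ξ ^ (-(2 * s)) = (S ^ d) ^ (-(s / d)) := by
        rw [latJap, ← hS, Real.sqrt_eq_rpow, ← Real.rpow_mul hS0, ← Real.rpow_natCast,
          ← Real.rpow_mul hS0]
        congr 1
        field_simp
    _ ≤ (∏ i, (1 + (ξ i : ℝ) ^ 2)) ^ (-(s / d)) :=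
        Real.rpow_le_rpow_of_nonpos (Finset.prod_pos fun i _ => hfac i) hprod_le
          (by have : 0 ≤ s / d := by positivity
              linarith)
    _ = ∏ i, (1 + (ξ i : ℝ) ^ 2) ^ (-(s / d)) :=
        (Real.finsetProd_rpow _ _ (fun i _ => (hfac i).le) _).symm

lemma l2Norm_latJap_rpow_neg_ne_top {s : ℝ} (hs : (d : ℝ) / 2 < s) :
    l2Norm (fun ξ : Fin d → ℤ => ENNReal.ofReal (latJap ξ ^ (-s))) ≠ ⊤ := by
  have hs0 : 0 ≤ s := (by positivity : (0 : ℝ) ≤ d / 2).trans hs.le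
  have hsum_ne_top : (∑' n : ℤ, ENNReal.ofReal ((1 + (n : ℝ) ^ 2) ^ (-(s / d)))) ^ d ≠ ⊤ := by
    rcases Nat.eq_zero_or_pos d with rfl | hd
    · simp
    have hq : 1 / 2 < s / d := by
      rw [lt_div_iff₀ (by positivity)]
      linarith
    rw [← ENNReal.ofReal_tsum_of_nonneg (fun n => by positivity)
      (summable_one_add_sq_int_rpow_neg hq)]
    exact ENNReal.pow_ne_top ENNReal.ofReal_ne_top
  refine ENNReal.rpow_ne_top_of_nonneg (by norm_num) (ne_top_of_le_ne_top hsum_ne_top ?_)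
  calc ∑' ξ : Fin d → ℤ, ENNReal.ofReal (latJap ξ ^ (-s)) ^ 2
      = ∑' ξ : Fin d → ℤ, ENNReal.ofReal (latJap ξ ^ (-(2 * s))) := by
        refine tsum_congr fun ξ => ?_
        rw [← ENNReal.ofReal_pow (latJap_rpow_nonneg ξ _), ← Real.rpow_natCast,
          ← Real.rpow_mul (latJap_pos ξ).le]
        ring_nf
    _ ≤ ∑' ξ : Fin d → ℤ, ∏ i, ENNReal.ofReal ((1 + (ξ i : ℝ) ^ 2) ^ (-(s / d))) := by
        refine ENNReal.tsum_le_tsum fun ξ => ?_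
        rw [← ENNReal.ofReal_prod_of_nonneg fun i _ => by positivity]
        exact ENNReal.ofReal_le_ofReal (latJap_rpow_neg_le_prod hs0 ξ)
    _ = (∑' n : ℤ, ENNReal.ofReal ((1 + (n : ℝ) ^ 2) ^ (-(s / d)))) ^ d :=
        ENNReal.tsum_fin_pi_prod (fun n : ℤ => ENNReal.ofReal ((1 + (n : ℝ) ^ 2) ^ (-(s / d)))) d

end Summability

section Weights

variable {d : ℕ}

noncomputable def expWeight (σ : ℝ) (ξ : Fin d → ℤ) : ℝ≥0∞ :=
  ENNReal.ofReal (Real.exp (σ * latNorm ξ))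

noncomputable def sobolevWeight (σ s : ℝ) (ξ : Fin d → ℤ) : ℝ≥0∞ :=
  expWeight σ ξ * ENNReal.ofReal (latJap ξ ^ s)

noncomputable def weightedAbs (w : (Fin d → ℤ) → ℝ≥0∞) (u : (Fin d → ℤ) → ℂ)
    (ξ : Fin d → ℤ) : ℝ≥0∞ :=
  w ξ * ‖u ξ‖ₑ

lemma hWeight_eq_sobolevWeight_sq (σ s : ℝ) (ξ : Fin d → ℤ) :
    hWeight σ s ξ = sobolevWeight σ s ξ ^ 2 := by
  rw [hWeight, sobolevWeight, expWeight, ← ENNReal.ofReal_mul (Real.exp_pos _).le,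
    ← ENNReal.ofReal_pow (mul_nonneg (Real.exp_pos _).le (latJap_rpow_nonneg ξ s)), mul_pow,
    ← Real.exp_nat_mul, ← Real.rpow_natCast,
    ← Real.rpow_mul (latJap_pos ξ).le]
  ring_nf

lemma hNorm_eq_l2Norm (σ s : ℝ) (u : (Fin d → ℤ) → ℂ) :
    hNorm σ s u = l2Norm (weightedAbs (sobolevWeight σ s) u) := by
  simp only [hNorm, hNormSq, l2Norm, weightedAbs, hWeight_eq_sobolevWeight_sq, mul_pow,
    enorm_eq_nnnorm]

lemma expWeight_le_mul {σ : ℝ} (hσ : 0 ≤ σ) (ξ ζ : Fin d → ℤ) :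
    expWeight σ ξ ≤ expWeight σ (ξ - ζ) * expWeight σ ζ := by
  rw [expWeight, expWeight, expWeight, ← ENNReal.ofReal_mul (Real.exp_pos _).le, ← Real.exp_add,
    ← mul_add]
  gcongr
  exact latNorm_le_add ξ ζ

lemma sobolevWeight_le {σ t : ℝ} (hσ : 0 ≤ σ) (ht : 0 ≤ t) (ξ ζ : Fin d → ℤ) :
    sobolevWeight σ t ξ ≤ ENNReal.ofReal (2 ^ t) *
      (sobolevWeight σ t (ξ - ζ) * expWeight σ ζ + expWeight σ (ξ - ζ) * sobolevWeight σ t ζ) := by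
  have hjap : ENNReal.ofReal (latJap ξ ^ t) ≤ ENNReal.ofReal (2 ^ t) *
      (ENNReal.ofReal (latJap (ξ - ζ) ^ t) + ENNReal.ofReal (latJap ζ ^ t)) := by
    rw [← ENNReal.ofReal_add (latJap_rpow_nonneg _ t) (latJap_rpow_nonneg ζ t),
      ← ENNReal.ofReal_mul (by positivity)]
    exact ENNReal.ofReal_le_ofReal (latJap_rpow_le ht ξ ζ)
  calc sobolevWeight σ t ξ
      ≤ (expWeight σ (ξ - ζ) * expWeight σ ζ) * (ENNReal.ofReal (2 ^ t) *
          (ENNReal.ofReal (latJap (ξ - ζ) ^ t) + ENNReal.ofReal (latJap ζ ^ t))) :=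
        mul_le_mul' (expWeight_le_mul hσ ξ ζ) hjap
    _ = _ := by simp only [sobolevWeight]; ring

lemma expWeight_eq_mul_sobolevWeight (σ s : ℝ) (ξ : Fin d → ℤ) :
    expWeight σ ξ = ENNReal.ofReal (latJap ξ ^ (-s)) * sobolevWeight σ s ξ := by
  rw [sobolevWeight, mul_left_comm, ← ENNReal.ofReal_mul (latJap_rpow_nonneg ξ _),
    ← Real.rpow_add (latJap_pos ξ), neg_add_cancel, Real.rpow_zero, ENNReal.ofReal_one, mul_one]

lemma tsum_weightedAbs_expWeight_le (σ s : ℝ) (u : (Fin d → ℤ) → ℂ) :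
    ∑' ξ, weightedAbs (expWeight σ) u ξ
      ≤ l2Norm (fun ξ : Fin d → ℤ => ENNReal.ofReal (latJap ξ ^ (-s))) * hNorm σ s u := by
  rw [hNorm_eq_l2Norm]
  calc ∑' ξ, weightedAbs (expWeight σ) u ξ
      = ∑' ξ, ENNReal.ofReal (latJap ξ ^ (-s)) * weightedAbs (sobolevWeight σ s) u ξ :=
        tsum_congr fun ξ => by
          rw [weightedAbs, weightedAbs, expWeight_eq_mul_sobolevWeight σ s, mul_assoc]
    _ ≤ _ := tsum_mul_le_l2Norm_mul_l2Norm _ _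

end Weights

section ProductEstimate

variable {d : ℕ} {σ t : ℝ}

lemma weightedAbs_conv_le (hσ : 0 ≤ σ) (ht : 0 ≤ t) (u₁ u₂ : (Fin d → ℤ) → ℂ)
    (ξ : Fin d → ℤ) :
    weightedAbs (sobolevWeight σ t) (conv u₁ u₂) ξ ≤ ENNReal.ofReal (2 ^ t) *
      (lconv (weightedAbs (sobolevWeight σ t) u₁) (weightedAbs (expWeight σ) u₂) ξ
        + lconv (weightedAbs (sobolevWeight σ t) u₂) (weightedAbs (expWeight σ) u₁) ξ) := by
  have hconv : ‖conv u₁ u₂ ξ‖ₑ ≤ ∑' ζ, ‖u₁ (ξ - ζ)‖ₑ * ‖u₂ ζ‖ₑ := by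
    simpa only [conv, enorm_mul] using enorm_tsum_le_tsum_enorm (f := fun ζ => u₁ (ξ - ζ) * u₂ ζ)
  rw [lconv_comm (weightedAbs (sobolevWeight σ t) u₂)]
  calc weightedAbs (sobolevWeight σ t) (conv u₁ u₂) ξ
      ≤ ∑' ζ, sobolevWeight σ t ξ * (‖u₁ (ξ - ζ)‖ₑ * ‖u₂ ζ‖ₑ) := by
        rw [weightedAbs, ENNReal.tsum_mul_left]
        gcongr
    _ ≤ ∑' ζ, ENNReal.ofReal (2 ^ t) *
          (weightedAbs (sobolevWeight σ t) u₁ (ξ - ζ) * weightedAbs (expWeight σ) u₂ ζ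
            + weightedAbs (expWeight σ) u₁ (ξ - ζ) * weightedAbs (sobolevWeight σ t) u₂ ζ) := by
        refine ENNReal.tsum_le_tsum fun ζ => ?_
        calc _ ≤ _ * _ := mul_le_mul_left (sobolevWeight_le hσ ht ξ ζ) _
          _ = _ := by simp only [weightedAbs]; ring
    _ = _ := by rw [ENNReal.tsum_mul_left, ENNReal.tsum_add]; rfl

lemma hNorm_conv_le (hσ : 0 ≤ σ) (ht : 0 ≤ t) (s : ℝ) (u₁ u₂ : (Fin d → ℤ) → ℂ) :
    hNorm σ t (conv u₁ u₂) ≤ ENNReal.ofReal (2 ^ t) *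
      l2Norm (fun ξ : Fin d → ℤ => ENNReal.ofReal (latJap ξ ^ (-s))) *
        (hNorm σ s u₁ * hNorm σ t u₂ + hNorm σ s u₂ * hNorm σ t u₁) := by
  set M := l2Norm (fun ξ : Fin d → ℤ => ENNReal.ofReal (latJap ξ ^ (-s)))
  set W : (Fin d → ℤ) → ℝ≥0∞ := sobolevWeight σ t
  set E : (Fin d → ℤ) → ℝ≥0∞ := expWeight σ
  have hyoung (u v : (Fin d → ℤ) → ℂ) :
      l2Norm (lconv (weightedAbs W u) (weightedAbs E v)) ≤ hNorm σ t u * (M * hNorm σ s v) := by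
    rw [hNorm_eq_l2Norm σ t u]
    exact (l2Norm_lconv_le _ _).trans (by gcongr; exact tsum_weightedAbs_expWeight_le σ s v)
  calc hNorm σ t (conv u₁ u₂) = l2Norm (weightedAbs W (conv u₁ u₂)) := hNorm_eq_l2Norm σ t _
    _ ≤ l2Norm (fun ξ => ENNReal.ofReal (2 ^ t) * (lconv (weightedAbs W u₁) (weightedAbs E u₂)
          + lconv (weightedAbs W u₂) (weightedAbs E u₁)) ξ) :=
        l2Norm_mono (weightedAbs_conv_le hσ ht u₁ u₂)
    _ ≤ ENNReal.ofReal (2 ^ t) * (l2Norm (lconv (weightedAbs W u₁) (weightedAbs E u₂))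
          + l2Norm (lconv (weightedAbs W u₂) (weightedAbs E u₁))) := by
        rw [l2Norm_const_mul]
        gcongr
        exact l2Norm_add_le _ _
    _ ≤ ENNReal.ofReal (2 ^ t) *
          (hNorm σ t u₁ * (M * hNorm σ s u₂) + hNorm σ t u₂ * (M * hNorm σ s u₁)) := by
        gcongr <;> exact hyoung _ _
    _ = _ := by ring

end ProductEstimate

/-- tame product estimate. For `s₀ > d/2` and `t ≥ 0`,
`‖u₁u₂‖_{H^{σ,t}} ≤ C(‖u₁‖_{H^{σ,s₀}}‖u₂‖_{H^{σ,t}} + ‖u₂‖_{H^{σ,s₀}}‖u₁‖_{H^{σ,t}})`,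
uniformly in `σ ≥ 0`. -/
theorem statement10 (d : ℕ) (s₀ t : ℝ) (hs₀ : (d : ℝ) / 2 < s₀) (ht : 0 ≤ t) :
    ∃ C : ℝ, 0 < C ∧ ∀ σ : ℝ, 0 ≤ σ → ∀ u₁ u₂ : (Fin d → ℤ) → ℂ,
      hNormSq σ s₀ u₁ ≠ ⊤ → hNormSq σ t u₁ ≠ ⊤ →
      hNormSq σ s₀ u₂ ≠ ⊤ → hNormSq σ t u₂ ≠ ⊤ →
      hNorm σ t (conv u₁ u₂)
        ≤ ENNReal.ofReal C * hNorm σ s₀ u₁ * hNorm σ t u₂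
          + ENNReal.ofReal C * hNorm σ s₀ u₂ * hNorm σ t u₁ := by
  set M := l2Norm (fun ξ : Fin d → ℤ => ENNReal.ofReal (latJap ξ ^ (-s₀)))
  have hM : M ≠ ⊤ := l2Norm_latJap_rpow_neg_ne_top hs₀
  refine ⟨2 ^ t * (M.toReal + 1), by positivity, fun σ hσ u₁ u₂ _ _ _ _ => ?_⟩
  have hC : ENNReal.ofReal (2 ^ t) * M ≤ ENNReal.ofReal (2 ^ t * (M.toReal + 1)) := by
    rw [ENNReal.ofReal_mul (by positivity), ← ENNReal.ofReal_toReal hM]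
    gcongr
    simp
  calc hNorm σ t (conv u₁ u₂)
      ≤ ENNReal.ofReal (2 ^ t) * M *
          (hNorm σ s₀ u₁ * hNorm σ t u₂ + hNorm σ s₀ u₂ * hNorm σ t u₁) :=
        hNorm_conv_le hσ ht s₀ u₁ u₂
    _ ≤ ENNReal.ofReal (2 ^ t * (M.toReal + 1)) *
          (hNorm σ s₀ u₁ * hNorm σ t u₂ + hNorm σ s₀ u₂ * hNorm σ t u₁) := by gcongr
    _ = _ := by ring
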